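/- Fix ĉ > 0 and Δ > 0. Suppose (r₁, r₂) and (r₁', r₂') are pairs in (0,1)² with r₁ < r₂ and r₁' < r₂' such that l(r₂) − l(r₁) = Δ = l(r₂') − l(r₁') and l̃(r₂) − l̃(r₁) < l̃(r₂') − l̃(r₁'). Then r₁ < r₁' and r₂ < r₂'. (In particular, the smaller component r₁ of the solution of the system l(r₂) − l(r₁) = (u11 − u10)/ĉ, l̃(r₂) − l̃(r₁) = (u₂ − u10)/ĉ is strictly increasing in u₂.) -/

import Mathlib

/-!
Both `l` and `l̃` are increasing on `(0, 1)`, with `l̃' r = r · l' r`. By Cauchy's mean value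
theorem, `l̃ b - l̃ a` therefore lies between `a · (l b - l a)` and `b · (l b - l a)`.
If `r₁' ≤ r₁`, then `r₂' ≤ r₂` (both intervals have the same `l`-length `Δ`), and these
bounds give `l̃ r₂' - l̃ r₁' ≤ l̃ r₂ - l̃ r₁`: when the intervals are disjoint, compare
`r₂' Δ ≤ r₁ Δ`; when they overlap, compare the two non-shared pieces, which have equal
`l`-length.
-/

open Set

noncomputable def l (r : ℝ) : ℝ := 2 * Real.log (r / (1 - r)) - 1 / r + 1 / (1 - r)

noncomputable def ltilde (r : ℝ) : ℝ := Real.log (r / (1 - r)) + r / (1 - r)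

section

variable {r a b : ℝ}

theorem hasDerivAt_div_one_sub (h1 : r ≠ 1) :
    HasDerivAt (fun x => x / (1 - x)) (1 / (1 - r) ^ 2) r := by
  have h1' : 1 - r ≠ 0 := sub_ne_zero.2 h1.symm
  refine ((hasDerivAt_id' r).div ((hasDerivAt_id' r).const_sub 1) h1').congr_deriv ?_
  field_simp
  ring

theorem hasDerivAt_log_div_one_sub (h0 : r ≠ 0) (h1 : r ≠ 1) :
    HasDerivAt (fun x => Real.log (x / (1 - x))) (1 / (r * (1 - r))) r := by
  have h1' : 1 - r ≠ 0 := sub_ne_zero.2 h1.symm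
  refine ((hasDerivAt_div_one_sub h1).log (div_ne_zero h0 h1')).congr_deriv ?_
  field_simp

theorem hasDerivAt_l (h0 : r ≠ 0) (h1 : r ≠ 1) :
    HasDerivAt l (1 / (r ^ 2 * (1 - r) ^ 2)) r := by
  have h1' : 1 - r ≠ 0 := sub_ne_zero.2 h1.symm
  have hinv := (hasDerivAt_const r (1 : ℝ)).div (hasDerivAt_id' r) h0
  have hinv' := (hasDerivAt_const r (1 : ℝ)).div ((hasDerivAt_id' r).const_sub 1) h1'
  refine ((((hasDerivAt_log_div_one_sub h0 h1).const_mul 2).sub hinv).add hinv').congr_deriv ?_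
  field_simp
  ring

theorem hasDerivAt_ltilde (h0 : r ≠ 0) (h1 : r ≠ 1) :
    HasDerivAt ltilde (r * (1 / (r ^ 2 * (1 - r) ^ 2))) r := by
  have h1' : 1 - r ≠ 0 := sub_ne_zero.2 h1.symm
  refine ((hasDerivAt_log_div_one_sub h0 h1).add (hasDerivAt_div_one_sub h1)).congr_deriv ?_
  field_simp
  ring

theorem l_strictMonoOn : StrictMonoOn l (Ioo 0 1) := by
  have hl (x) (hx : x ∈ Ioo (0 : ℝ) 1) := hasDerivAt_l hx.1.ne' hx.2.ne
  refine strictMonoOn_of_hasDerivWithinAt_pos (convex_Ioo 0 1)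
    (fun x hx => (hl x hx).continuousAt.continuousWithinAt)
    (fun x hx => (hl x (interior_subset hx)).hasDerivWithinAt) ?_
  rw [interior_Ioo]
  intro x hx
  have := sub_pos.2 hx.2
  have := hx.1
  positivity

theorem exists_mem_Ioo_ltilde_sub_eq_mul_l_sub (ha : 0 < a) (hab : a < b) (hb : b < 1) :
    ∃ c ∈ Ioo a b, ltilde b - ltilde a = c * (l b - l a) := by
  have hl (x) (hx : x ∈ Icc a b) : HasDerivAt l (1 / (x ^ 2 * (1 - x) ^ 2)) x :=
    hasDerivAt_l (ha.trans_le hx.1).ne' (hx.2.trans_lt hb).ne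
  have hlt (x) (hx : x ∈ Icc a b) : HasDerivAt ltilde (x * (1 / (x ^ 2 * (1 - x) ^ 2))) x :=
    hasDerivAt_ltilde (ha.trans_le hx.1).ne' (hx.2.trans_lt hb).ne
  obtain ⟨c, hc, hcauchy⟩ := exists_ratio_hasDerivAt_eq_ratio_slope l _ hab
    (fun x hx => (hl x hx).continuousAt.continuousWithinAt)
    (fun x hx => hl x (Ioo_subset_Icc_self hx)) ltilde _
    (fun x hx => (hlt x hx).continuousAt.continuousWithinAt)
    (fun x hx => hlt x (Ioo_subset_Icc_self hx))
  refine ⟨c, hc, ?_⟩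
  have hpos : 0 < 1 / (c ^ 2 * (1 - c) ^ 2) := by
    have := ha.trans hc.1
    have := sub_pos.2 (hc.2.trans hb)
    positivity
  exact mul_right_cancel₀ hpos.ne' (by linarith)

theorem l_sub_nonneg (ha : 0 < a) (hab : a ≤ b) (hb : b < 1) : 0 ≤ l b - l a :=
  sub_nonneg.2 <| l_strictMonoOn.monotoneOn ⟨ha, hab.trans_lt hb⟩ ⟨ha.trans_le hab, hb⟩ hab

theorem mul_l_sub_le_ltilde_sub (ha : 0 < a) (hab : a ≤ b) (hb : b < 1) :
    a * (l b - l a) ≤ ltilde b - ltilde a := by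
  rcases hab.eq_or_lt with rfl | hab
  · simp
  obtain ⟨c, hc, heq⟩ := exists_mem_Ioo_ltilde_sub_eq_mul_l_sub ha hab hb
  rw [heq]
  exact mul_le_mul_of_nonneg_right hc.1.le (l_sub_nonneg ha hab.le hb)

theorem ltilde_sub_le_mul_l_sub (ha : 0 < a) (hab : a ≤ b) (hb : b < 1) :
    ltilde b - ltilde a ≤ b * (l b - l a) := by
  rcases hab.eq_or_lt with rfl | hab
  · simp
  obtain ⟨c, hc, heq⟩ := exists_mem_Ioo_ltilde_sub_eq_mul_l_sub ha hab hb
  rw [heq]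
  exact mul_le_mul_of_nonneg_right hc.2.le (l_sub_nonneg ha hab.le hb)

theorem ltilde_sub_le_ltilde_sub_of_l_sub_eq {a' b' : ℝ} (ha' : 0 < a') (ha'a : a' ≤ a)
    (hab : a ≤ b) (ha'b' : a' ≤ b') (hb : b < 1) (hb' : b' < 1)
    (hl : l b' - l a' = l b - l a) : ltilde b' - ltilde a' ≤ ltilde b - ltilde a := by
  have ha : 0 < a := ha'.trans_le ha'a
  have hb'b : b' ≤ b := by
    by_contra! hbb'
    have := l_strictMonoOn ⟨ha.trans_le hab, hb⟩ ⟨ha'.trans_le ha'b', hb'⟩ hbb'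
    linarith [l_sub_nonneg ha' ha'a (hab.trans_lt hb)]
  rcases le_total b' a with hdisj | hover
  · calc ltilde b' - ltilde a' ≤ b' * (l b' - l a') := ltilde_sub_le_mul_l_sub ha' ha'b' hb'
      _ ≤ a * (l b - l a) := by rw [hl]; gcongr; exact l_sub_nonneg ha hab hb
      _ ≤ ltilde b - ltilde a := mul_l_sub_le_ltilde_sub ha hab hb
  · have hpieces : l a - l a' = l b - l b' := by linarith
    calc ltilde b' - ltilde a' = (ltilde a - ltilde a') + (ltilde b' - ltilde a) := by ring
      _ ≤ a * (l a - l a') + (ltilde b' - ltilde a) := by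
        gcongr; exact ltilde_sub_le_mul_l_sub ha' ha'a (hover.trans_lt hb')
      _ ≤ b' * (l b - l b') + (ltilde b' - ltilde a) := by
        rw [hpieces]; gcongr; exact l_sub_nonneg (ha.trans_le hover) hb'b hb
      _ ≤ (ltilde b - ltilde b') + (ltilde b' - ltilde a) := by
        gcongr; exact mul_l_sub_le_ltilde_sub (ha.trans_le hover) hb'b hb
      _ = ltilde b - ltilde a := by ring

end

theorem stmt_8_general (Δ r₁ r₂ r₁' r₂' : ℝ)
    (hr₁ : r₁ ∈ Set.Ioo (0 : ℝ) 1) (hr₂ : r₂ ∈ Set.Ioo (0 : ℝ) 1)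
    (hr₁' : r₁' ∈ Set.Ioo (0 : ℝ) 1) (hr₂' : r₂' ∈ Set.Ioo (0 : ℝ) 1)
    (h12 : r₁ < r₂) (h12' : r₁' < r₂')
    (hl : l r₂ - l r₁ = Δ) (hl' : l r₂' - l r₁' = Δ)
    (hlt : ltilde r₂ - ltilde r₁ < ltilde r₂' - ltilde r₁') :
    r₁ < r₁' ∧ r₂ < r₂' := by
  have h₁ : r₁ < r₁' := by
    by_contra! h
    exact hlt.not_ge <| ltilde_sub_le_ltilde_sub_of_l_sub_eq hr₁'.1 h h12.le h12'.le hr₂.2 hr₂'.2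
      (hl'.trans hl.symm)
  exact ⟨h₁, (l_strictMonoOn.lt_iff_lt hr₂ hr₂').1 (by linarith [l_strictMonoOn hr₁ hr₁' h₁])⟩

theorem stmt_8 (Δ r₁ r₂ r₁' r₂' : ℝ) (hΔ : 0 < Δ)
    (hr₁ : r₁ ∈ Set.Ioo (0 : ℝ) 1) (hr₂ : r₂ ∈ Set.Ioo (0 : ℝ) 1)
    (hr₁' : r₁' ∈ Set.Ioo (0 : ℝ) 1) (hr₂' : r₂' ∈ Set.Ioo (0 : ℝ) 1)
    (h12 : r₁ < r₂) (h12' : r₁' < r₂')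
    (hl : l r₂ - l r₁ = Δ) (hl' : l r₂' - l r₁' = Δ)
    (hlt : ltilde r₂ - ltilde r₁ < ltilde r₂' - ltilde r₁') :
    r₁ < r₁' ∧ r₂ < r₂' :=
  stmt_8_general Δ r₁ r₂ r₁' r₂' hr₁ hr₂ hr₁' hr₂' h12 h12' hl hl' hlt
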